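/- For every odd k ≥ 3, λ_{2,k} = (k−1)/(2k), where λ_{2,k} is the supremum over measurable g : [0,1]^{k−1} → {0,1} of the Lebesgue measure of {x ∈ [0,1]^k : g(x₁,…,x_{k−1}) > g(x₂,…,x_k)}, i.e. the measure of {x : g(x₁,…,x_{k−1}) = 1 and g(x₂,…,x_k) = 0}. -/

import Mathlib

set_option linter.unusedSectionVars false
set_option maxHeartbeats 1000000

open MeasureTheory unitInterval ENNReal Finset

namespace Stmt7

open Classical in
noncomputable def g0 (m : ℕ) (y : Fin m → I) : Fin 2 :=
  if ∃ i : Fin m, Odd i.1 ∧ ∀ j, j ≠ i → y j < y i then 1 else 0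

lemma measurable_g0 (m : ℕ) : Measurable (g0 m) := by
  have hA : MeasurableSet {y : Fin m → I | ∃ i : Fin m, Odd i.1 ∧ ∀ j, j ≠ i → y j < y i} := by
    rw [Set.setOf_exists]
    refine MeasurableSet.iUnion fun i => ?_
    by_cases hi : Odd i.1
    · simp only [hi, true_and, Set.setOf_forall]
      refine MeasurableSet.iInter fun j => ?_
      by_cases hj : j = i
      · simp [hj]
      · have hm1 : Measurable fun y : Fin m → I => (y j : ℝ) :=
          measurable_subtype_coe.comp (measurable_pi_apply j)
        have hm2 : Measurable fun y : Fin m → I => (y i : ℝ) :=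
          measurable_subtype_coe.comp (measurable_pi_apply i)
        have h := measurableSet_lt hm1 hm2
        convert h using 1
        ext y
        simp only [Set.mem_iInter, Set.mem_setOf_eq, hj, ne_eq, not_false_iff, forall_const,
          Set.mem_setOf_eq]
        exact Iff.rfl
    · simp [hi]
  unfold g0
  exact Measurable.ite hA measurable_const measurable_const

lemma g0_spec {m : ℕ} (y : Fin m → I) (i₀ : Fin m) (h : ∀ i, i ≠ i₀ → y i < y i₀) :
    g0 m y = if Odd i₀.1 then 1 else 0 := by
  unfold g0
  by_cases hex : ∃ i : Fin m, Odd i.1 ∧ ∀ j, j ≠ i → y j < y i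
  · obtain ⟨i, hi, hdom⟩ := hex
    have hii : i = i₀ := by
      by_contra hne
      exact absurd (hdom i₀ (fun he => hne he.symm)) (not_lt.2 (h i hne).le)
    rw [if_pos ⟨i, hi, hdom⟩, if_pos (hii ▸ hi)]
  · have hno : ¬ Odd i₀.1 := fun ho => hex ⟨i₀, ho, h⟩
    rw [if_neg hex, if_neg hno]

lemma two_mul_descents {k : ℕ} [NeZero k] (c : Fin k → Fin 2) :
    2 * (univ.filter fun j : Fin k => c j = 1 ∧ c (j+1) = 0).card
      = (univ.filter fun j : Fin k => c j ≠ c (j+1)).card := by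
  have key : ∀ a b : Fin 2,
      ((if a = 1 ∧ b = 0 then (1:ℤ) else 0) - (if a = 0 ∧ b = 1 then 1 else 0))
        = (a.1 : ℤ) - b.1 := by decide
  have key2 : ∀ a b : Fin 2, (if a ≠ b then (1:ℤ) else 0)
        = (if a = 1 ∧ b = 0 then (1:ℤ) else 0) + (if a = 0 ∧ b = 1 then 1 else 0) := by decide
  have hAB : (∑ j : Fin k, if c j = 1 ∧ c (j+1) = 0 then (1:ℤ) else 0)
      = ∑ j : Fin k, if c j = 0 ∧ c (j+1) = 1 then (1:ℤ) else 0 := by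
    have h0 : (∑ j : Fin k, (((if c j = 1 ∧ c (j+1) = 0 then (1:ℤ) else 0)
        - (if c j = 0 ∧ c (j+1) = 1 then 1 else 0)))) = 0 := by
      simp_rw [key]
      rw [Finset.sum_sub_distrib, sub_eq_zero]
      have := Equiv.sum_comp (Equiv.addRight (1:Fin k)) (fun j => ((c j).1 : ℤ))
      simp only [Equiv.coe_addRight] at this
      exact this.symm
    rw [Finset.sum_sub_distrib, sub_eq_zero] at h0
    exact h0
  have cA : ((univ.filter fun j : Fin k => c j = 1 ∧ c (j+1) = 0).card : ℤ)
      = ∑ j : Fin k, if c j = 1 ∧ c (j+1) = 0 then (1:ℤ) else 0 := by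
    rw [Finset.card_filter]; push_cast; rfl
  have cU : ((univ.filter fun j : Fin k => c j ≠ c (j+1)).card : ℤ)
      = ∑ j : Fin k, if c j ≠ c (j+1) then (1:ℤ) else 0 := by
    rw [Finset.card_filter]; push_cast; rfl
  have : ((univ.filter fun j : Fin k => c j ≠ c (j+1)).card : ℤ)
      = 2 * ((univ.filter fun j : Fin k => c j = 1 ∧ c (j+1) = 0).card : ℤ) := by
    rw [cU, cA]
    simp_rw [key2]
    rw [Finset.sum_add_distrib, ← hAB]
    ring
  omega

section FinFacts
variable {k : ℕ} [NeZero k]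

lemma val_sub' (a b : Fin k) :
    (a - b).val = if b.val ≤ a.val then a.val - b.val else k + a.val - b.val := by
  have ha := a.isLt; have hb := b.isLt
  rw [Fin.sub_def]
  simp only [Fin.val_mk]
  by_cases h : b.val ≤ a.val
  · rw [if_pos h, Nat.mod_eq_sub_mod (by omega), Nat.mod_eq_of_lt (by omega)]
    omega
  · rw [if_neg h, Nat.mod_eq_of_lt (by omega)]
    omega

lemma val_add_one (hk3 : 3 ≤ k) (a : Fin k) :
    (a + 1).val = if a.val + 1 = k then 0 else a.val + 1 := by
  have ha := a.isLt
  rw [Fin.add_def, Fin.val_one', Nat.mod_eq_of_lt (show 1 < k by omega)]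
  simp only [Fin.val_mk]
  by_cases h : a.val + 1 = k
  · simp [h, Nat.mod_self]
  · rw [if_neg h, Nat.mod_eq_of_lt (by omega)]

lemma succ_ne (hk3 : 3 ≤ k) (a : Fin k) : a + 1 ≠ a := by
  intro h
  have hv := congrArg Fin.val h
  rw [val_add_one hk3] at hv
  have := a.isLt
  split_ifs at hv <;> omega

lemma eq_succ_iff (hk3 : 3 ≤ k) (js j : Fin k) : j = js + 1 ↔ (js - j).val = k - 1 := by
  have := j.isLt; have := js.isLt
  rw [Fin.ext_iff, val_add_one hk3, val_sub']
  split_ifs <;> omega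

lemma P_pos (js j : Fin k) (h : j ≠ js) : (js - j).val ≠ 0 := by
  have := j.isLt; have := js.isLt
  have hne : j.val ≠ js.val := fun hv => h (Fin.ext hv)
  rw [val_sub']
  split_ifs <;> omega

lemma P_succ (hk3 : 3 ≤ k) (js j : Fin k) (h0 : j ≠ js) (h1 : j ≠ js + 1) :
    (js - (j + 1)).val = (js - j).val - 1 := by
  have hv0 : (js - j).val ≠ 0 := P_pos js j h0
  have hv1 : (js - j).val ≠ k - 1 := fun hv => h1 ((eq_succ_iff hk3 _ _).2 hv)
  have hj := j.isLt; have hjs := js.isLt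
  have e1 := val_sub' js j
  have e2 := val_add_one hk3 j
  have e3 := val_sub' js (j + 1)
  rw [e2] at e3
  rw [e3, e1]
  rw [e1] at hv0 hv1
  split_ifs at hv0 hv1 e3 ⊢ <;> omega

lemma P_two (hk3 : 3 ≤ k) (js : Fin k) : (js - (js + 1 + 1)).val = k - 2 := by
  have := js.isLt
  rw [val_sub', val_add_one hk3, val_add_one hk3]
  split_ifs <;> omega

lemma P_lt (hk3 : 3 ≤ k) (js j : Fin k) (h1 : j ≠ js + 1) : (js - j).val < k - 1 := by
  have h : (js - j).val ≠ k - 1 := fun hv => h1 ((eq_succ_iff hk3 _ _).2 hv)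
  have := (js - j).isLt
  omega

lemma one_add_cast (hk3 : 3 ≤ k) (i : Fin (k-1)) :
    ((1 : Fin k) + Fin.castLE (Nat.sub_le k 1) i) = ⟨i.1 + 1, by have hi0 := i.isLt; omega⟩ := by
  have hi := i.isLt
  apply Fin.ext
  simp only [Fin.add_def, Fin.val_one', Fin.coe_castLE, Fin.val_mk]
  rw [Nat.mod_eq_of_lt (show 1 < k by omega), Nat.mod_eq_of_lt (by omega)]
  omega


end FinFacts

lemma vol_block_le (m : ℕ) (hm : 0 < m) (t : ℕ) :
    volume (Subtype.val ⁻¹' (Set.Icc ((t:ℝ)/m) ((t+1)/m)) : Set I) ≤ ((m : ℝ≥0∞))⁻¹ := by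
  have hemb : MeasurableEmbedding ((↑) : I → ℝ) :=
    MeasurableEmbedding.subtype_coe measurableSet_Icc
  rw [unitInterval.volume_def, hemb.comap_apply]
  refine le_trans (measure_mono (Set.image_preimage_subset _ _)) ?_
  rw [Real.volume_Icc]
  have h1 : (t+1:ℝ)/m - t/m = 1/m := by rw [div_sub_div_same]; ring_nf
  rw [h1, one_div, ENNReal.ofReal_inv_of_pos (by positivity), ENNReal.ofReal_natCast]

lemma null_pair {k : ℕ} (i j : Fin k) (hij : i ≠ j) :
    volume {x : Fin k → I | x i = x j} = 0 := by
  have key : ∀ m : ℕ, volume {x : Fin k → I | x i = x j} ≤ ((m:ℝ≥0∞))⁻¹ := by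
    intro m
    rcases Nat.eq_zero_or_pos m with hm | hm
    · simp [hm]
    have hm0 : (m : ℝ≥0∞) ≠ 0 := Nat.cast_ne_zero.2 hm.ne'
    have hmR : (0:ℝ) < m := Nat.cast_pos.2 hm
    set B : ℕ → Set I := fun t => Subtype.val ⁻¹' (Set.Icc ((t:ℝ)/m) ((t+1)/m)) with hB
    set s : ℕ → Fin k → Set I := fun t l => if l = i ∨ l = j then B t else Set.univ with hs
    have hcover : {x : Fin k → I | x i = x j} ⊆ ⋃ t : Fin m, Set.pi Set.univ (s t.1) := by
      intro x hx
      have hxij : x i = x j := hx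
      set v : ℝ := (x i : ℝ) with hv
      have hv0 : 0 ≤ v := (x i).2.1
      have hv1 : v ≤ 1 := (x i).2.2
      set F := ⌊v * m⌋₊ with hF
      have hFle : (F:ℝ) ≤ v*m := Nat.floor_le (by positivity)
      have hltF : v*m < F+1 := Nat.lt_floor_add_one _
      refine Set.mem_iUnion.2 ⟨⟨min F (m-1), by omega⟩, Set.mem_univ_pi.2 fun l => ?_⟩
      by_cases hl : l = i ∨ l = j
      · have hxl : (x l : ℝ) = v := by
          rcases hl with h | h
          · rw [h]
          · rw [h, ← hxij]
        simp only [hs, if_pos hl]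
        show x l ∈ B (min F (m-1))
        simp only [hB, Set.mem_preimage, Set.mem_Icc, hxl]
        rcases le_or_gt F (m-1) with hc | hc
        · rw [min_eq_left hc]
          constructor
          · rw [div_le_iff₀ hmR]; linarith
          · rw [le_div_iff₀ hmR]; push_cast; linarith
        · rw [min_eq_right hc.le]
          have hFm : (m:ℝ) ≤ F := by exact_mod_cast Nat.le_of_lt_succ (by omega)
          have hcast : ((m-1 : ℕ) : ℝ) = (m:ℝ) - 1 := by
            push_cast [Nat.cast_sub hm]; ring
          constructor
          · rw [hcast, div_le_iff₀ hmR]; nlinarith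
          · rw [le_div_iff₀ hmR, hcast]; nlinarith
      · simp only [hs, if_neg hl]; exact Set.mem_univ _
    refine le_trans (measure_mono hcover) (le_trans (measure_iUnion_le _) ?_)
    have hbox : ∀ t : Fin m, volume (Set.pi Set.univ (s t.1)) ≤ (m:ℝ≥0∞)⁻¹ * (m:ℝ≥0∞)⁻¹ := by
      intro t
      rw [volume_pi_pi]
      rw [← Finset.mul_prod_erase univ _ (mem_univ i)]
      rw [← Finset.mul_prod_erase (univ.erase i) _ (Finset.mem_erase.2 ⟨hij.symm, mem_univ j⟩)]
      have hfi : volume (s t.1 i) ≤ (m:ℝ≥0∞)⁻¹ := by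
        simp only [hs, if_pos (Or.inl rfl)]; exact vol_block_le m hm t.1
      have hfj : volume (s t.1 j) ≤ (m:ℝ≥0∞)⁻¹ := by
        simp only [hs, if_pos (Or.inr rfl)]; exact vol_block_le m hm t.1
      have hrest : (∏ l ∈ (univ.erase i).erase j, volume (s t.1 l)) ≤ 1 :=
        Finset.prod_le_one (fun _ _ => zero_le) (fun l _ => prob_le_one)
      calc volume (s t.1 i) * (volume (s t.1 j) * ∏ l ∈ (univ.erase i).erase j, volume (s t.1 l))
          ≤ (m:ℝ≥0∞)⁻¹ * ((m:ℝ≥0∞)⁻¹ * 1) := by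
            exact mul_le_mul' hfi (mul_le_mul' hfj hrest)
        _ = (m:ℝ≥0∞)⁻¹ * (m:ℝ≥0∞)⁻¹ := by rw [mul_one]
    calc (∑' t : Fin m, volume (Set.pi Set.univ (s t.1)))
        ≤ ∑' _t : Fin m, (m:ℝ≥0∞)⁻¹ * (m:ℝ≥0∞)⁻¹ := ENNReal.tsum_le_tsum hbox
      _ = m * ((m:ℝ≥0∞)⁻¹ * (m:ℝ≥0∞)⁻¹) := by
          rw [tsum_fintype]; simp [Finset.card_univ, mul_comm]
      _ = (m * (m:ℝ≥0∞)⁻¹) * (m:ℝ≥0∞)⁻¹ := by ring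
      _ = (m:ℝ≥0∞)⁻¹ := by rw [ENNReal.mul_inv_cancel hm0 (natCast_ne_top m), one_mul]
  have hlim : Filter.Tendsto (fun m : ℕ => ((m:ℝ≥0∞))⁻¹) Filter.atTop (nhds 0) :=
    ENNReal.tendsto_inv_nat_nhds_zero
  exact le_zero_iff.1 (ge_of_tendsto' hlim key)

lemma null_noninj (k : ℕ) : volume {x : Fin k → I | ¬ Function.Injective x} = 0 := by
  have hsub : {x : Fin k → I | ¬ Function.Injective x}
      ⊆ ⋃ i, ⋃ j, {x : Fin k → I | i ≠ j ∧ x i = x j} := by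
    intro x hx
    obtain ⟨a, b, hab, hne⟩ := Function.not_injective_iff.1 hx
    exact Set.mem_iUnion.2 ⟨a, Set.mem_iUnion.2 ⟨b, hne, hab⟩⟩
  refine measure_mono_null hsub ?_
  refine measure_iUnion_null fun i => measure_iUnion_null fun j => ?_
  by_cases hij : i = j
  · simp [hij]
  · have h : {x : Fin k → I | i ≠ j ∧ x i = x j} = {x : Fin k → I | x i = x j} := by
      ext x; simp [hij]
    rw [h]; exact null_pair i j hij

section Main
variable {k : ℕ} [NeZero k]

def wseq (g : (Fin (k-1) → I) → Fin 2) (x : Fin k → I) (j : Fin k) : Fin 2 :=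
  g (fun i => x (j + Fin.castLE (Nat.sub_le k 1) i))

lemma wseq_shift (g : (Fin (k-1) → I) → Fin 2) (x : Fin k → I) (j : Fin k) :
    wseq g (fun l => x (l + 1)) j = wseq g x (j + 1) := by
  unfold wseq
  congr 1
  funext i
  congr 1
  rw [add_right_comm]

open Fin.NatCast in
lemma wseq_iterate (g : (Fin (k-1) → I) → Fin 2) (x : Fin k → I) (m : ℕ) (j : Fin k) :
    wseq g ((fun (x : Fin k → I) l => x (l + 1))^[m] x) j = wseq g x (j + (m : Fin k)) := by
  induction m generalizing x with
  | zero => simp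
  | succ n ih =>
      rw [Function.iterate_succ_apply, ih, wseq_shift]
      congr 1
      push_cast
      abel

lemma measurable_wseq (g : (Fin (k-1) → I) → Fin 2) (hg : Measurable g) (j : Fin k) :
    Measurable (fun x => wseq g x j) :=
  hg.comp (measurable_pi_lambda _ fun _ => measurable_pi_apply _)

lemma measurableSet_Ej (g : (Fin (k-1) → I) → Fin 2) (hg : Measurable g) (a b : Fin k) :
    MeasurableSet {x : Fin k → I | wseq g x a = 1 ∧ wseq g x b = 0} := by
  have h : {x : Fin k → I | wseq g x a = 1 ∧ wseq g x b = 0}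
      = (fun x => wseq g x a)⁻¹' {1} ∩ (fun x => wseq g x b)⁻¹' {0} := by
    ext x; simp [Set.mem_preimage]
  rw [h]
  exact ((measurable_wseq g hg a) (measurableSet_singleton 1)).inter
    ((measurable_wseq g hg b) (measurableSet_singleton 0))

lemma shift_measurePreserving :
    MeasurePreserving (fun (x : Fin k → I) j => x (j + 1)) volume volume := by
  have h := volume_measurePreserving_piCongrLeft (fun _ : Fin k => I) (Equiv.subRight (1 : Fin k))
  convert h using 1
  funext x j
  simp [MeasurableEquiv.piCongrLeft, Equiv.piCongrLeft_apply_eq_cast]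



lemma count_le (hodd : Odd k) (g : (Fin (k-1) → I) → Fin 2) (x : Fin k → I) :
    (univ.filter fun j : Fin k =>
      wseq g x j = 1 ∧ wseq g x (j+1) = 0).card ≤ (k - 1) / 2 := by
  have h := two_mul_descents (wseq g x)
  have hle : (univ.filter fun j : Fin k => wseq g x j ≠ wseq g x (j+1)).card ≤ k :=
    le_trans (Finset.card_filter_le _ _) (by simp)
  obtain ⟨t, ht⟩ := hodd
  omega

lemma count_descents (hk3 : 3 ≤ k) (hodd : Odd k) (x : Fin k → I)
    (hinj : Function.Injective x) :
    (univ.filter fun j : Fin k =>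
        wseq (g0 (k-1)) x j = 1 ∧ wseq (g0 (k-1)) x (j+1) = 0).card = (k - 1) / 2 := by
  obtain ⟨js, hjs⟩ : ∃ js : Fin k, ∀ l, x l ≤ x js := Finite.exists_max x
  have hmax : ∀ l, l ≠ js → x l < x js :=
    fun l hl => lt_of_le_of_ne (hjs l) (fun he => hl (hinj he))
  set c : Fin k → Fin 2 := wseq (g0 (k-1)) x with hc
  have L1 : ∀ j : Fin k, j ≠ js + 1 → c j = if Odd (js - j).val then 1 else 0 := by
    intro j hj
    have hp : (js - j).val < k - 1 := P_lt hk3 js j hj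
    set i₀ : Fin (k-1) := ⟨(js - j).val, hp⟩ with hi₀
    have hcast : Fin.castLE (Nat.sub_le k 1) i₀ = js - j := by
      apply Fin.ext; simp [hi₀]
    have hidx : j + Fin.castLE (Nat.sub_le k 1) i₀ = js := by
      rw [hcast]; abel
    have hdom : ∀ i : Fin (k-1), i ≠ i₀ →
        x (j + Fin.castLE (Nat.sub_le k 1) i) < x (j + Fin.castLE (Nat.sub_le k 1) i₀) := by
      intro i hi
      rw [hidx]
      apply hmax
      intro he
      apply hi
      apply Fin.castLE_injective (Nat.sub_le k 1)
      rw [hcast]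
      have : j + Fin.castLE (Nat.sub_le k 1) i = j + (js - j) := by rw [he]; abel
      exact add_left_cancel this
    show g0 (k-1) _ = _
    rw [g0_spec _ i₀ hdom]
  have hjsne : js ≠ js + 1 := (succ_ne hk3 js).symm
  have hcjs : c js = 0 := by
    rw [L1 js hjsne]
    simp [sub_self]
  have hc2 : c (js + 1 + 1) = 1 := by
    rw [L1 _ (succ_ne hk3 (js+1)), P_two hk3 js]
    have hoddk2 : Odd (k - 2) := by obtain ⟨t, ht⟩ := hodd; exact ⟨t-1, by omega⟩
    simp [hoddk2]
  have hone : (1 : Fin 2) ≠ 0 := by decide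
  set j₀ : Fin k := if c (js + 1) = 0 then js else js + 1 with hj₀
  have hfe : (univ.filter fun j : Fin k => c j = c (j+1)) = {j₀} := by
    ext j
    simp only [mem_filter, mem_univ, true_and, mem_singleton]
    constructor
    · intro hcj
      by_contra hne
      by_cases h1 : j = js
      · subst h1
        rw [hcjs] at hcj
        rw [hj₀, if_pos hcj.symm] at hne
        exact hne rfl
      by_cases h2 : j = js + 1
      · subst h2
        rw [hc2] at hcj
        rw [hj₀, if_neg (by rw [hcj]; exact hone)] at hne
        exact hne rfl
      · have hp1 : c j = if Odd (js - j).val then 1 else 0 := L1 j h2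
        have hp2 : c (j+1) = if Odd (js - (j+1)).val then 1 else 0 :=
          L1 (j+1) (fun he => h1 (add_right_cancel he))
        have hsucc : (js - (j+1)).val = (js - j).val - 1 := P_succ hk3 js j h1 h2
        have hpos : (js - j).val ≠ 0 := P_pos js j h1
        rw [hp1, hp2, hsucc] at hcj
        rcases Nat.even_or_odd ((js - j).val) with he | ho
        · have h3 : ¬ Odd (js - j).val := Nat.not_odd_iff_even.2 he
          have h4 : Odd ((js - j).val - 1) := by
            obtain ⟨t, ht⟩ := he; exact ⟨t-1, by omega⟩
          rw [if_neg h3, if_pos h4] at hcj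
          exact absurd hcj (by decide)
        · have h4 : ¬ Odd ((js - j).val - 1) := by
            obtain ⟨t, ht⟩ := ho
            rintro ⟨u, hu⟩
            omega
          rw [if_pos ho, if_neg h4] at hcj
          exact absurd hcj (by decide)
    · intro hj; subst hj
      rw [hj₀]
      by_cases ha : c (js + 1) = 0
      · rw [if_pos ha, hcjs, ha]
      · rw [if_neg ha]
        have h2' : ∀ a : Fin 2, a ≠ 0 → a = 1 := by decide
        rw [h2' _ ha, hc2]
  have hU : (univ.filter fun j : Fin k => c j ≠ c (j+1)).card = k - 1 := by
    have hsplit := Finset.card_filter_add_card_filter_not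
      (s := (univ : Finset (Fin k))) (p := fun j : Fin k => c j = c (j+1))
    rw [hfe] at hsplit
    have hcu : (univ : Finset (Fin k)).card = k := by simp
    have hne' : (univ.filter fun j : Fin k => ¬ (c j = c (j+1))).card
        = (univ.filter fun j : Fin k => c j ≠ c (j+1)).card := rfl
    rw [Finset.card_singleton, hcu, hne'] at hsplit
    omega
  have h2D := two_mul_descents c
  rw [hU] at h2D
  obtain ⟨t, ht⟩ := hodd
  omega

lemma vol_eq_integral (hk3 : 3 ≤ k) (g : (Fin (k-1) → I) → Fin 2) (hg : Measurable g) :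
    (k : ℝ≥0∞) * volume {x : Fin k → I | wseq g x 0 = 1 ∧ wseq g x 1 = 0}
      = ∫⁻ x, ((univ.filter fun j : Fin k =>
          wseq g x j = 1 ∧ wseq g x (j+1) = 0).card : ℝ≥0∞) := by
  set S : (Fin k → I) → (Fin k → I) := fun x l => x (l + 1) with hS
  set E : Set (Fin k → I) := {x | wseq g x 0 = 1 ∧ wseq g x 1 = 0} with hE
  set Ej : Fin k → Set (Fin k → I) :=
    fun j => {x | wseq g x j = 1 ∧ wseq g x (j+1) = 0} with hEj
  have hEm : MeasurableSet E := measurableSet_Ej g hg 0 1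
  have hEjm : ∀ j : Fin k, MeasurableSet (Ej j) := fun j => measurableSet_Ej g hg j (j+1)
  have hpre : ∀ j : Fin k, (S^[j.val]) ⁻¹' E = Ej j := by
    intro j
    ext x
    simp only [Set.mem_preimage, hE, hEj, Set.mem_setOf_eq]
    rw [wseq_iterate, wseq_iterate, Fin.cast_val_eq_self, zero_add, add_comm]
  have hvolEj : ∀ j : Fin k, volume (Ej j) = volume E := by
    intro j
    rw [← hpre j]
    exact (shift_measurePreserving.iterate j.val).measure_preimage hEm.nullMeasurableSet
  calc (k : ℝ≥0∞) * volume E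
      = ∑ j : Fin k, volume (Ej j) := by
        simp only [hvolEj, Finset.sum_const, Finset.card_univ, Fintype.card_fin, nsmul_eq_mul]
    _ = ∑ j : Fin k, ∫⁻ x, (Ej j).indicator (fun _ => (1:ℝ≥0∞)) x := by
        refine Finset.sum_congr rfl fun j _ => ?_
        exact (lintegral_indicator_one (hEjm j)).symm
    _ = ∫⁻ x, ∑ j : Fin k, (Ej j).indicator (fun _ => (1:ℝ≥0∞)) x :=
        (lintegral_finset_sum _ (fun j _ => (measurable_one.indicator (hEjm j)))).symm
    _ = ∫⁻ x, ((univ.filter fun j : Fin k =>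
          wseq g x j = 1 ∧ wseq g x (j+1) = 0).card : ℝ≥0∞) := by
        refine lintegral_congr fun x => ?_
        rw [Finset.card_filter, Nat.cast_sum]
        refine Finset.sum_congr rfl fun j _ => ?_
        simp only [Set.indicator_apply, hEj, Set.mem_setOf_eq,
          apply_ite (Nat.cast : ℕ → ℝ≥0∞), Nat.cast_one, Nat.cast_zero]

lemma cast_arith (hk3 : 3 ≤ k) (hodd : Odd k) :
    (((k-1)/2 : ℕ) : ℝ≥0∞) / (k : ℝ≥0∞) = ((k : ℝ≥0∞) - 1) / (2 * k) := by
  set a := (k-1)/2 with ha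
  have hka : (k - 1 : ℕ) = 2 * a := by obtain ⟨t, ht⟩ := hodd; omega
  have h1 : ((k:ℝ≥0∞) - 1) = ((k-1 : ℕ) : ℝ≥0∞) := by
    rw [ENNReal.natCast_sub]; simp
  rw [h1, hka]
  push_cast
  rw [ENNReal.mul_div_mul_left _ _ two_ne_zero ENNReal.ofNat_ne_top]

lemma upper_bound (hk3 : 3 ≤ k) (hodd : Odd k) (g : (Fin (k-1) → I) → Fin 2)
    (hg : Measurable g) :
    volume {x : Fin k → I | wseq g x 0 = 1 ∧ wseq g x 1 = 0}
      ≤ ((k : ℝ≥0∞) - 1) / (2 * k) := by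
  have hk0 : (k : ℝ≥0∞) ≠ 0 := Nat.cast_ne_zero.2 (by omega)
  have hkt : (k : ℝ≥0∞) ≠ ⊤ := natCast_ne_top k
  have h1 := vol_eq_integral hk3 g hg
  have h2 : (∫⁻ x, ((univ.filter fun j : Fin k =>
      wseq g x j = 1 ∧ wseq g x (j+1) = 0).card : ℝ≥0∞)) ≤ (((k-1)/2 : ℕ) : ℝ≥0∞) := by
    have hb : ∀ x : Fin k → I, ((univ.filter fun j : Fin k =>
        wseq g x j = 1 ∧ wseq g x (j+1) = 0).card : ℝ≥0∞) ≤ (((k-1)/2 : ℕ) : ℝ≥0∞) :=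
      fun x => Nat.cast_le.2 (count_le hodd g x)
    calc (∫⁻ x, ((univ.filter fun j : Fin k =>
          wseq g x j = 1 ∧ wseq g x (j+1) = 0).card : ℝ≥0∞))
        ≤ ∫⁻ _x : Fin k → I, (((k-1)/2 : ℕ) : ℝ≥0∞) := lintegral_mono hb
      _ = (((k-1)/2 : ℕ) : ℝ≥0∞) := by rw [lintegral_const, measure_univ, mul_one]
  rw [← cast_arith hk3 hodd]
  refine (ENNReal.le_div_iff_mul_le (Or.inl hk0) (Or.inl hkt)).2 ?_
  rw [mul_comm]
  rw [← h1] at h2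
  exact h2

lemma lower_bound (hk3 : 3 ≤ k) (hodd : Odd k) :
    volume {x : Fin k → I | wseq (g0 (k-1)) x 0 = 1 ∧ wseq (g0 (k-1)) x 1 = 0}
      = ((k : ℝ≥0∞) - 1) / (2 * k) := by
  have hk0 : (k : ℝ≥0∞) ≠ 0 := Nat.cast_ne_zero.2 (by omega)
  have hkt : (k : ℝ≥0∞) ≠ ⊤ := natCast_ne_top k
  have h1 := vol_eq_integral hk3 (g0 (k-1)) (measurable_g0 (k-1))
  have hae : ∀ᵐ x : (Fin k → I), Function.Injective x := by
    rw [Filter.eventually_iff, mem_ae_iff]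
    have : {x : Fin k → I | Function.Injective x}ᶜ
        = {x : Fin k → I | ¬ Function.Injective x} := rfl
    rw [this]
    exact null_noninj k
  have h2 : (∫⁻ x, ((univ.filter fun j : Fin k =>
      wseq (g0 (k-1)) x j = 1 ∧ wseq (g0 (k-1)) x (j+1) = 0).card : ℝ≥0∞))
      = (((k-1)/2 : ℕ) : ℝ≥0∞) := by
    rw [lintegral_congr_ae (hae.mono fun x hx => by
      rw [count_descents hk3 hodd x hx])]
    rw [lintegral_const, measure_univ, mul_one]
  rw [h2] at h1
  rw [← cast_arith hk3 hodd]
  exact (ENNReal.eq_div_iff hk0 hkt).2 h1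

end Main
end Stmt7

/-- λ_{2,k} = (k-1)/(2k) for odd k ≥ 3. -/
theorem stmt_7 (k : ℕ) (hk : 3 ≤ k) (hodd : Odd k) :
    (⨆ (g : (Fin (k - 1) → I) → Fin 2) (_ : Measurable g),
        volume {x : Fin k → I |
          g (fun i => x (Fin.castLE (by omega) i)) >
          g (fun i => x ⟨i.1 + 1, by omega⟩)}) =
      ((k : ℝ≥0∞) - 1) / (2 * k) := by
  haveI : NeZero k := ⟨by omega⟩
  have hset : ∀ g : (Fin (k-1) → I) → Fin 2,
      {x : Fin k → I |
          g (fun i => x (Fin.castLE (by omega) i)) >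
          g (fun i => x ⟨i.1 + 1, by omega⟩)}
        = {x : Fin k → I | Stmt7.wseq g x 0 = 1 ∧ Stmt7.wseq g x 1 = 0} := by
    intro g
    ext x
    simp only [Set.mem_setOf_eq, gt_iff_lt]
    have hgt : ∀ a b : Fin 2, (b < a ↔ (a = 1 ∧ b = 0)) := by decide
    rw [hgt]
    have hw0 : Stmt7.wseq g x 0 = g (fun i => x (Fin.castLE (by omega) i)) := by
      unfold Stmt7.wseq
      congr 1
      funext i
      congr 1
      rw [zero_add]
    have hw1 : Stmt7.wseq g x 1 = g (fun i => x ⟨i.1 + 1, by omega⟩) := by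
      unfold Stmt7.wseq
      congr 1
      funext i
      congr 1
      exact Stmt7.one_add_cast hk i
    rw [hw0, hw1]
  refine le_antisymm ?_ ?_
  · refine iSup_le fun g => iSup_le fun hg => ?_
    rw [hset g]
    exact Stmt7.upper_bound hk hodd g hg
  · refine le_iSup_of_le (Stmt7.g0 (k-1))
      (le_iSup_of_le (Stmt7.measurable_g0 (k-1)) ?_)
    rw [hset (Stmt7.g0 (k-1)), Stmt7.lower_bound hk hodd]
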